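/- If h = 1_{(−∞,z]} for some z ∈ ℝ, then the solution y of the Stein equation satisfies sup_{x∈ℝ} |x·y(x)| ≤ 1/(1−ψ). -/

import Mathlib

open MeasureTheory ProbabilityTheory Real Set

noncomputable section

/-- `h̄_ψ = E h(N)` for `N ~ N(0, (1-ψ)⁻¹)`. -/
def gaussMean (ψ : ℝ) (h : ℝ → ℝ) : ℝ :=
  ∫ x, h x ∂(gaussianReal 0 (Real.toNNReal (1 - ψ)⁻¹))

/-- The bounded solution `y` of the Stein equation
`y'(x) - (1-ψ) x y(x) = h(x) - h̄_ψ`, given explicitly by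
`y(x) = -e^{(1-ψ)x²/2} ∫_x^∞ e^{-(1-ψ)t²/2} (h(t) - h̄_ψ) dt`. -/
def steinSol (ψ : ℝ) (h : ℝ → ℝ) (x : ℝ) : ℝ :=
  - Real.exp ((1 - ψ) * x ^ 2 / 2) *
      ∫ t in Set.Ioi x, Real.exp (-((1 - ψ) * t ^ 2 / 2)) * (h t - gaussMean ψ h)

/-!
Write `a = 1 - ψ`, `g(t) = e^{-a t²/2}` and `f = g (h - h̄_ψ)`. Since `0 ≤ h ≤ 1` we have
`|f| ≤ g`, and `∫ f = 0` because `g` is a multiple of the density of `N`. Hence the tail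
integral of `f` over `(x, ∞)` equals minus the one over `(-∞, x]`, and by symmetry it suffices to
bound `x ∫_x^∞ g` for `x ≥ 0`. Mills' inequality `x ∫_x^∞ g ≤ ∫_x^∞ t g(t) dt = g(x)/a` then
cancels the factor `e^{a x²/2}` of `y`.
-/

namespace SteinEquation

open Filter

variable {a : ℝ}

lemma integrable_exp_neg_mul_sq_div_two (ha : 0 < a) :
    Integrable fun t : ℝ => exp (-(a * t ^ 2 / 2)) := by
  convert integrable_exp_neg_mul_sq (half_pos ha) using 2 with t
  ring_nf

lemma integrable_mul_exp_neg_mul_sq_div_two (ha : 0 < a) :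
    Integrable fun t : ℝ => t * exp (-(a * t ^ 2 / 2)) := by
  convert integrable_mul_exp_neg_mul_sq (half_pos ha) using 2 with t
  ring_nf

lemma hasDerivAt_neg_exp_neg_mul_sq_div_two_div (ha : 0 < a) (t : ℝ) :
    HasDerivAt (fun t => -exp (-(a * t ^ 2 / 2)) / a) (t * exp (-(a * t ^ 2 / 2))) t := by
  have hexp : HasDerivAt (fun t : ℝ => -(a * t ^ 2 / 2)) (-(a * t)) t :=
    (((hasDerivAt_pow 2 t).const_mul a).div_const 2).fun_neg.congr_deriv (by ring)
  refine (hexp.exp.fun_neg.div_const a).congr_deriv ?_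
  field_simp

lemma tendsto_neg_exp_neg_mul_sq_div_two_div (ha : 0 < a) :
    Tendsto (fun t : ℝ => -exp (-(a * t ^ 2 / 2)) / a) atTop (nhds 0) := by
  have hsq : Tendsto (fun t : ℝ => a * t ^ 2 / 2) atTop atTop :=
    ((tendsto_pow_atTop two_ne_zero).const_mul_atTop ha).atTop_div_const two_pos
  simpa using ((tendsto_exp_atBot.comp (tendsto_neg_atTop_atBot.comp hsq)).neg).div_const a

lemma integral_Ioi_mul_exp_neg_mul_sq_div_two (ha : 0 < a) (x : ℝ) :
    ∫ t in Ioi x, t * exp (-(a * t ^ 2 / 2)) = exp (-(a * x ^ 2 / 2)) / a := by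
  rw [integral_Ioi_of_hasDerivAt_of_tendsto'
    (fun t _ => hasDerivAt_neg_exp_neg_mul_sq_div_two_div ha t)
    (integrable_mul_exp_neg_mul_sq_div_two ha).integrableOn
    (tendsto_neg_exp_neg_mul_sq_div_two_div ha)]
  ring

/-- Mills' inequality for the Gaussian tail; it holds trivially for `x ≤ 0`. -/
lemma mul_integral_Ioi_exp_neg_mul_sq_div_two_le (ha : 0 < a) (x : ℝ) :
    x * ∫ t in Ioi x, exp (-(a * t ^ 2 / 2)) ≤ exp (-(a * x ^ 2 / 2)) / a := by
  rw [← integral_Ioi_mul_exp_neg_mul_sq_div_two ha x, ← integral_const_mul]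
  refine setIntegral_mono_on ((integrable_exp_neg_mul_sq_div_two ha).const_mul x).integrableOn
    (integrable_mul_exp_neg_mul_sq_div_two ha).integrableOn measurableSet_Ioi fun t ht => ?_
  exact mul_le_mul_of_nonneg_right (le_of_lt ht) (exp_pos _).le

lemma abs_mul_abs_integral_Ioi_le {f : ℝ → ℝ} (ha : 0 < a) (hf_meas : AEStronglyMeasurable f)
    (hf_le : ∀ t, |f t| ≤ exp (-(a * t ^ 2 / 2))) (hf_zero : ∫ t, f t = 0) (x : ℝ) :
    |x| * |∫ t in Ioi x, f t| ≤ exp (-(a * x ^ 2 / 2)) / a := by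
  wlog hx : 0 ≤ x generalizing f x
  · have hreflect : ∫ t in Ioi (-x), f (-t) = -∫ t in Ioi x, f t := by
      have hsplit := integral_add_compl (measurableSet_Ioi (a := x))
        ((integrable_exp_neg_mul_sq_div_two ha).mono' hf_meas (Eventually.of_forall hf_le))
      rw [compl_Ioi, hf_zero] at hsplit
      rw [integral_comp_neg_Ioi, neg_neg]
      linarith
    have := this (f := fun t => f (-t)) (hf_meas.comp_quasiMeasurePreserving
      (Measure.measurePreserving_neg volume).quasiMeasurePreserving)
      (fun t => by simpa using hf_le (-t)) (by rw [integral_neg_eq_self]; exact hf_zero)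
      (-x) (by linarith)
    simpa [hreflect] using this
  calc |x| * |∫ t in Ioi x, f t|
      ≤ x * ∫ t in Ioi x, exp (-(a * t ^ 2 / 2)) := by
        rw [abs_of_nonneg hx]
        refine mul_le_mul_of_nonneg_left ?_ hx
        simpa using norm_integral_le_of_norm_le (f := f)
          (integrable_exp_neg_mul_sq_div_two ha).integrableOn (Eventually.of_forall hf_le)
    _ ≤ exp (-(a * x ^ 2 / 2)) / a := mul_integral_Ioi_exp_neg_mul_sq_div_two_le ha x

lemma gaussianPDFReal_zero_toNNReal_inv (ha : 0 < a) (t : ℝ) :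
    gaussianPDFReal 0 (toNNReal a⁻¹) t = (√(2 * π / a))⁻¹ * exp (-(a * t ^ 2 / 2)) := by
  rw [gaussianPDFReal, coe_toNNReal _ (inv_pos.2 ha).le, sub_zero]
  congr 3
  field_simp

lemma integral_exp_mul_sub_gaussMean {ψ : ℝ} (hψ : ψ < 1) {h : ℝ → ℝ}
    (hh : Integrable fun t => exp (-((1 - ψ) * t ^ 2 / 2)) * h t) :
    ∫ t, exp (-((1 - ψ) * t ^ 2 / 2)) * (h t - gaussMean ψ h) = 0 := by
  have ha : 0 < 1 - ψ := sub_pos.2 hψ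
  have hv : toNNReal (1 - ψ)⁻¹ ≠ 0 := by simpa using ha
  have hmean :
      gaussMean ψ h = (√(2 * π / (1 - ψ)))⁻¹ * ∫ t, exp (-((1 - ψ) * t ^ 2 / 2)) * h t := by
    rw [gaussMean, integral_gaussianReal_eq_integral_smul hv, ← integral_const_mul]
    simp_rw [smul_eq_mul, gaussianPDFReal_zero_toNNReal_inv ha, mul_assoc]
  have hmass : (√(2 * π / (1 - ψ)))⁻¹ * ∫ t, exp (-((1 - ψ) * t ^ 2 / 2)) = 1 := by
    rw [← integral_const_mul]
    simp_rw [← gaussianPDFReal_zero_toNNReal_inv ha]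
    exact integral_gaussianPDFReal_eq_one 0 hv
  simp_rw [mul_sub]
  rw [integral_sub hh ((integrable_exp_neg_mul_sq_div_two ha).mul_const _), integral_mul_const,
    hmean]
  linear_combination (-∫ t, exp (-((1 - ψ) * t ^ 2 / 2)) * h t) * hmass

lemma gaussMean_mem_Icc (ψ : ℝ) {h : ℝ → ℝ} (hh : ∀ t, h t ∈ Icc 0 1) :
    gaussMean ψ h ∈ Icc 0 1 := by
  refine ⟨integral_nonneg fun t => (hh t).1, (le_abs_self _).trans ?_⟩
  simpa [gaussMean] using norm_integral_le_of_norm_le_const (f := h) (C := 1)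
    (μ := gaussianReal 0 (toNNReal (1 - ψ)⁻¹)) (Eventually.of_forall fun t => by
      simpa [abs_le] using ⟨(hh t).1.trans' (by norm_num), (hh t).2⟩)

end SteinEquation

open SteinEquation

theorem stmt8_general (ψ : ℝ) (hψ1 : ψ < 1) (z : ℝ) :
    ∀ x : ℝ,
      |x * steinSol ψ (Set.indicator (Set.Iic z) fun _ => (1 : ℝ)) x| ≤ 1 / (1 - ψ) := by
  intro x
  have ha : 0 < 1 - ψ := sub_pos.2 hψ1
  set h : ℝ → ℝ := Set.indicator (Set.Iic z) fun _ => 1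
  have hh_meas : Measurable h := measurable_const.indicator measurableSet_Iic
  have hh : ∀ t, h t ∈ Icc 0 1 := fun t => by
    by_cases ht : t ∈ Iic z <;> simp [h, ht]
  have hm := gaussMean_mem_Icc ψ hh
  have hf_le : ∀ t, |exp (-((1 - ψ) * t ^ 2 / 2)) * (h t - gaussMean ψ h)|
      ≤ exp (-((1 - ψ) * t ^ 2 / 2)) := fun t => by
    rw [abs_mul, abs_of_pos (exp_pos _)]
    exact mul_le_of_le_one_right (exp_pos _).le
      (abs_sub_le_iff.2 ⟨by linarith [(hh t).2, hm.1], by linarith [(hh t).1, hm.2]⟩)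
  have hgh : Integrable fun t => exp (-((1 - ψ) * t ^ 2 / 2)) * h t :=
    (integrable_exp_neg_mul_sq_div_two ha).mono' (by fun_prop) (ae_of_all _ fun t => by
      rw [norm_mul, norm_of_nonneg (exp_pos _).le, norm_of_nonneg (hh t).1]
      exact mul_le_of_le_one_right (exp_pos _).le (hh t).2)
  have htail := abs_mul_abs_integral_Ioi_le ha (by fun_prop) hf_le
    (integral_exp_mul_sub_gaussMean hψ1 hgh) x
  rw [steinSol, abs_mul, abs_mul, abs_neg, abs_of_pos (exp_pos _)]
  calc |x| * (exp ((1 - ψ) * x ^ 2 / 2) * |∫ t in Ioi x, _|)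
      = exp ((1 - ψ) * x ^ 2 / 2) * (|x| * |∫ t in Ioi x, _|) := by ring
    _ ≤ exp ((1 - ψ) * x ^ 2 / 2) * (exp (-((1 - ψ) * x ^ 2 / 2)) / (1 - ψ)) := by gcongr
    _ = 1 / (1 - ψ) := by rw [exp_neg]; field_simp

theorem stmt8 (ψ : ℝ) (hψ0 : 0 ≤ ψ) (hψ1 : ψ < 1) (z : ℝ) :
    ∀ x : ℝ,
      |x * steinSol ψ (Set.indicator (Set.Iic z) fun _ => (1 : ℝ)) x| ≤ 1 / (1 - ψ) :=
  stmt8_general ψ hψ1 z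
end
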